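/- Let S be a semigroup and F a field such that the map J ↦ ϱ_J, sending each ideal J of F[S] to the restriction to S of the congruence on F[S] induced by J, is a homomorphism from (Con(F[S]), ∘) into the semigroup of binary relations (B_S, ∘). Then S is a permutable semigroup. -/

import Mathlib

/-!
Every congruence `α` on `S` is recovered as `ϱ` of the ideal `F[α]`, the kernel of
`F[S] → F[S/α]`. Since `F[α] + F[β] = F[β] + F[α]`, the homomorphism property gives
`α ∘ β = ϱ_{F[α] + F[β]} = β ∘ α`.
-/

/-- `J` is a two-sided ideal: a subspace closed under left and right multiplication. -/
def IsTwoSidedIdeal {F A : Type*} [Field F] [NonUnitalNonAssocSemiring A]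
    [Module F A] (J : Submodule F A) : Prop :=
  ∀ a x : A, x ∈ J → a * x ∈ J ∧ x * a ∈ J

/-- `ϱ_J`: the restriction to `S` of the congruence on the semigroup algebra
`F[S]` induced by an ideal `J` (`x ~ y` iff `x - y ∈ J`). -/
def rho {F S : Type*} [Field F] [Semigroup S]
    (J : Submodule F (MonoidAlgebra F S)) : S → S → Prop :=
  fun s t => MonoidAlgebra.single s (1 : F) - MonoidAlgebra.single t (1 : F) ∈ J

open MonoidAlgebra

theorem isTwoSidedIdeal_ker {F A B : Type*} [Field F] [NonUnitalNonAssocSemiring A]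
    [Module F A] [NonUnitalNonAssocSemiring B] [Module F B] (φ : A →ₙₐ[F] B) :
    IsTwoSidedIdeal (LinearMap.ker (φ : A →ₗ[F] B)) := by
  intro a x hx
  simp only [LinearMap.mem_ker, LinearMap.coe_coe, map_mul] at hx ⊢
  simp [hx]

theorem rho_ker_mapDomain {F S T : Type*} [Field F] [Semigroup S] [Semigroup T]
    (f : S →ₙ* T) :
    rho (LinearMap.ker (mapDomainNonUnitalAlgHom F F f : F[S] →ₗ[F] F[T])) = ⇑(Con.ker f) := by
  ext s t
  rw [rho, LinearMap.mem_ker, map_sub, sub_eq_zero, Con.ker_rel]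
  simp only [LinearMap.coe_coe, mapDomainNonUnitalAlgHom_apply, MulHom.toFun_eq_coe,
    NonUnitalRingHom.coe_toMulHom, mapDomainNonUnitalRingHom_apply, mapDomain_single]
  exact (single_left_injective (one_ne_zero (α := F))).eq_iff

/-- The congruence on `F[S]` obtained by composing the congruences of two ideals `J₁, J₂`
is the congruence of `J₁ + J₂`, so the homomorphism property reads
`ϱ_{J₁+J₂} = ϱ_{J₁} ∘ ϱ_{J₂}`. -/
theorem permutable_of_rho_hom {F S : Type*} [Field F] [Semigroup S]
    (h : ∀ J₁ J₂ : Submodule F (MonoidAlgebra F S),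
      IsTwoSidedIdeal J₁ → IsTwoSidedIdeal J₂ →
        rho (J₁ ⊔ J₂) = Relation.Comp (rho J₁) (rho J₂)) :
    ∀ α β : Con S, Relation.Comp ⇑α ⇑β = Relation.Comp ⇑β ⇑α := by
  intro α β
  let J (γ : Con S) : Submodule F F[S] :=
    LinearMap.ker (mapDomainNonUnitalAlgHom F F γ.mkMulHom : F[S] →ₗ[F] F[γ.Quotient])
  have hJ (γ : Con S) : IsTwoSidedIdeal (J γ) := isTwoSidedIdeal_ker _
  have rho_J (γ : Con S) : rho (J γ) = ⇑γ := by
    rw [rho_ker_mapDomain, Con.ker_mkMulHom_eq]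
  calc Relation.Comp ⇑α ⇑β
      = rho (J α ⊔ J β) := by rw [h _ _ (hJ α) (hJ β), rho_J, rho_J]
    _ = rho (J β ⊔ J α) := by rw [sup_comm]
    _ = Relation.Comp ⇑β ⇑α := by rw [h _ _ (hJ β) (hJ α), rho_J, rho_J]
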